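/- Let L be a finite lattice which is not a chain. Then L contains a unique maximal sublattice B that is a block, and L has the form C₁ ⊕ B, or B ⊕ C₂, or C₁ ⊕ B ⊕ C₂, where C₁ and C₂ are chains. Moreover η(L) = η(B) and Red(L) = Red(B). -/

import Mathlib

/-- An element of a lattice is join-reducible if it is the join of two elements
both distinct from it. -/
def JoinReducible {α : Type*} [Lattice α] (x : α) : Prop :=
  ∃ y z : α, y ≠ x ∧ z ≠ x ∧ y ⊔ z = x

/-- An element of a lattice is meet-reducible if it is the meet of two elements
both distinct from it. -/
def MeetReducible {α : Type*} [Lattice α] (x : α) : Prop :=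
  ∃ y z : α, y ≠ x ∧ z ≠ x ∧ y ⊓ z = x

/-- An element is reducible if it is join-reducible or meet-reducible. -/
def Reducible {α : Type*} [Lattice α] (x : α) : Prop :=
  JoinReducible x ∨ MeetReducible x

/-- `Red(L)`: the set of reducible elements of the lattice. -/
def RedSet (α : Type*) [Lattice α] : Set α := {x | Reducible x}

/-- `Irr(L)`: the set of doubly irreducible (i.e. non-reducible) elements. -/
def IrrSet (α : Type*) [Lattice α] : Set α := {x | ¬ Reducible x}

/-- The cover graph of a poset: vertices are the elements, edges are covering pairs. -/
def coverGraph (α : Type*) [PartialOrder α] : SimpleGraph α where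
  Adj x y := x ⋖ y ∨ y ⋖ x
  symm := ⟨fun _ _ h => h.symm⟩
  loopless := ⟨fun x h => by rcases h with h | h <;> exact h.lt.false⟩

/-- The nullity of a (finite) poset: `m - n + c` where `m` is the number of edges,
`n` the number of vertices and `c` the number of connected components of the cover graph. -/
noncomputable def nullity (α : Type*) [PartialOrder α] : ℤ :=
  (Nat.card (coverGraph α).edgeSet : ℤ) - (Nat.card α : ℤ)
    + (Nat.card (coverGraph α).ConnectedComponent : ℤ)

/-- A subset of a lattice which is a sublattice and, with the induced order, a block:
it has a greatest element which is join-reducible in it, and a least element which is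
meet-reducible in it. -/
def IsBlockSet {α : Type*} [Lattice α] (s : Set α) : Prop :=
  (∀ x ∈ s, ∀ y ∈ s, x ⊓ y ∈ s ∧ x ⊔ y ∈ s) ∧
  (∃ t ∈ s, (∀ x ∈ s, x ≤ t) ∧ ∃ y ∈ s, ∃ z ∈ s, y ≠ t ∧ z ≠ t ∧ y ⊔ z = t) ∧
  (∃ b ∈ s, (∀ x ∈ s, b ≤ x) ∧ ∃ y ∈ s, ∃ z ∈ s, y ≠ b ∧ z ≠ b ∧ y ⊓ z = b)

/-- The set of elements of `s` that are reducible within the sublattice `s`. -/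
def RedIn {α : Type*} [Lattice α] (s : Set α) : Set α :=
  {x | x ∈ s ∧ ((∃ y ∈ s, ∃ z ∈ s, y ≠ x ∧ z ≠ x ∧ y ⊔ z = x) ∨
    (∃ y ∈ s, ∃ z ∈ s, y ≠ x ∧ z ≠ x ∧ y ⊓ z = x))}

/-!
Let `a` be the least meet-reducible and `b` the greatest join-reducible element: they exist
because the meet of two incomparable elements is meet-reducible, so that the meet-reducible
elements are closed under `⊓` (dually for joins). If `x` were incomparable with `a`, then `x ⊓ a`
would be a meet-reducible element strictly below `a`; for the same reason `Iic a` is a chain,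
and dually for `b`. So `L = Iio a ⊕ Icc a b ⊕ Ioi b`. The two witnesses `y, z` of a reducible
element are incomparable, so their meet is meet-reducible and their join join-reducible: both
lie in `Icc a b`. Hence every reducible element is reducible in `Icc a b`, and the top and
bottom of any block are squeezed into `Icc a b`.
Finally, each `x < a` has exactly one upper cover, so cutting off the chain below `a`
removes as many edges as vertices from the cover graph and keeps it connected.
-/

open Set OrderDual

section Reducibility

variable {α : Type*} [Lattice α] {a b x y z : α}

lemma meetReducible_inf_of_not_le (hxy : ¬ x ≤ y) (hyx : ¬ y ≤ x) : MeetReducible (x ⊓ y) :=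
  ⟨x, y, fun h => hxy (inf_eq_left.mp h.symm), fun h => hyx (inf_eq_right.mp h.symm), rfl⟩

lemma joinReducible_sup_of_not_le (hxy : ¬ x ≤ y) (hyx : ¬ y ≤ x) : JoinReducible (x ⊔ y) :=
  ⟨x, y, fun h => hyx (sup_eq_left.mp h.symm), fun h => hxy (sup_eq_right.mp h.symm), rfl⟩

lemma infClosed_meetReducible : InfClosed {x : α | MeetReducible x} := by
  intro x (hx : MeetReducible x) y (hy : MeetReducible y)
  show MeetReducible (x ⊓ y)
  by_cases hxy : x ≤ y
  · rwa [inf_eq_left.mpr hxy]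
  by_cases hyx : y ≤ x
  · rwa [inf_eq_right.mpr hyx]
  exact meetReducible_inf_of_not_le hxy hyx

lemma supClosed_joinReducible : SupClosed {x : α | JoinReducible x} := by
  intro x (hx : JoinReducible x) y (hy : JoinReducible y)
  show JoinReducible (x ⊔ y)
  by_cases hxy : x ≤ y
  · rwa [sup_eq_right.mpr hxy]
  by_cases hyx : y ≤ x
  · rwa [sup_eq_left.mpr hyx]
  exact joinReducible_sup_of_not_le hxy hyx

lemma InfClosed.exists_isLeast [Finite α] {s : Set α} (hs : InfClosed s) (hne : s.Nonempty) :
    ∃ a, IsLeast s a := by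
  obtain ⟨a, ha⟩ := s.toFinite.exists_minimal hne
  exact ⟨a, ha.prop, fun y hy => (ha.2 (hs ha.prop hy) inf_le_left).trans inf_le_right⟩

lemma SupClosed.exists_isGreatest [Finite α] {s : Set α} (hs : SupClosed s) (hne : s.Nonempty) :
    ∃ b, IsGreatest s b := by
  obtain ⟨b, hb⟩ := s.toFinite.exists_maximal hne
  exact ⟨b, hb.prop, fun y hy => le_sup_right.trans (hb.2 (hs hb.prop hy) le_sup_left)⟩

lemma not_le_of_sup_eq (h : y ⊔ z = x) (hz : z ≠ x) : ¬ y ≤ z :=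
  fun hyz => hz (by rwa [sup_eq_right.mpr hyz] at h)

lemma not_le_of_inf_eq (h : y ⊓ z = x) (hy : y ≠ x) : ¬ y ≤ z :=
  fun hyz => hy (by rwa [inf_eq_left.mpr hyz] at h)

lemma le_or_ge_of_isLeast_meetReducible (ha : IsLeast {x : α | MeetReducible x} a) (x : α) :
    x ≤ a ∨ a ≤ x := by
  by_contra! h
  exact h.2 ((ha.2 (meetReducible_inf_of_not_le h.1 h.2)).trans inf_le_left)

lemma isChain_Iic_of_isLeast_meetReducible (ha : IsLeast {x : α | MeetReducible x} a) :
    IsChain (· ≤ ·) (Iic a) := by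
  intro x (hx : x ≤ a) y _ _
  by_contra! h
  exact h.1 (hx.trans ((ha.2 (meetReducible_inf_of_not_le h.1 h.2)).trans inf_le_right))

lemma le_or_ge_of_isGreatest_joinReducible (hb : IsGreatest {x : α | JoinReducible x} b)
    (x : α) : x ≤ b ∨ b ≤ x :=
  (le_or_ge_of_isLeast_meetReducible hb.dual (toDual x)).symm

lemma isChain_Ici_of_isGreatest_joinReducible (hb : IsGreatest {x : α | JoinReducible x} b) :
    IsChain (· ≤ ·) (Ici b) :=
  (isChain_Iic_of_isLeast_meetReducible hb.dual).symm

lemma JoinReducible.exists_mem_Icc (ha : IsLeast {x : α | MeetReducible x} a)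
    (hb : IsGreatest {x : α | JoinReducible x} b) (hx : JoinReducible x) :
    ∃ y ∈ Icc a b, ∃ z ∈ Icc a b, y ≠ x ∧ z ≠ x ∧ y ⊔ z = x := by
  obtain ⟨y, z, hy, hz, rfl⟩ := hx
  have hyz : a ≤ y ⊓ z :=
    ha.2 (meetReducible_inf_of_not_le (not_le_of_sup_eq rfl hz)
      (not_le_of_sup_eq (sup_comm z y) hy))
  have hyzb : y ⊔ z ≤ b := hb.2 ⟨y, z, hy, hz, rfl⟩
  exact ⟨y, ⟨le_inf_iff.mp hyz |>.1, le_sup_left.trans hyzb⟩,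
    z, ⟨le_inf_iff.mp hyz |>.2, le_sup_right.trans hyzb⟩, hy, hz, rfl⟩

lemma MeetReducible.exists_mem_Icc (ha : IsLeast {x : α | MeetReducible x} a)
    (hb : IsGreatest {x : α | JoinReducible x} b) (hx : MeetReducible x) :
    ∃ y ∈ Icc a b, ∃ z ∈ Icc a b, y ≠ x ∧ z ≠ x ∧ y ⊓ z = x := by
  obtain ⟨y, z, hy, hz, rfl⟩ := hx
  have hyz : y ⊔ z ≤ b :=
    hb.2 (joinReducible_sup_of_not_le (not_le_of_inf_eq rfl hy)
      (not_le_of_inf_eq (inf_comm z y) hz))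
  have hayz : a ≤ y ⊓ z := ha.2 ⟨y, z, hy, hz, rfl⟩
  exact ⟨y, ⟨hayz.trans inf_le_left, sup_le_iff.mp hyz |>.1⟩,
    z, ⟨hayz.trans inf_le_right, sup_le_iff.mp hyz |>.2⟩, hy, hz, rfl⟩

lemma redSet_eq_redIn_Icc (ha : IsLeast {x : α | MeetReducible x} a)
    (hb : IsGreatest {x : α | JoinReducible x} b) :
    RedSet α = RedIn (Icc a b) := by
  ext x
  constructor
  · rintro (hx | hx)
    · obtain ⟨y, hy, z, hz, hyx, hzx, rfl⟩ := hx.exists_mem_Icc ha hb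
      exact ⟨⟨hy.1.trans le_sup_left, hb.2 hx⟩, Or.inl ⟨y, hy, z, hz, hyx, hzx, rfl⟩⟩
    · obtain ⟨y, hy, z, hz, hyx, hzx, rfl⟩ := hx.exists_mem_Icc ha hb
      exact ⟨⟨ha.2 hx, inf_le_left.trans hy.2⟩, Or.inr ⟨y, hy, z, hz, hyx, hzx, rfl⟩⟩
  · rintro ⟨-, ⟨y, -, z, -, h⟩ | ⟨y, -, z, -, h⟩⟩
    exacts [Or.inl ⟨y, z, h⟩, Or.inr ⟨y, z, h⟩]

lemma isBlockSet_Icc (ha : IsLeast {x : α | MeetReducible x} a)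
    (hb : IsGreatest {x : α | JoinReducible x} b) :
    IsBlockSet (Icc a b) := by
  obtain ⟨y, hy, z, hz, htop⟩ := hb.1.exists_mem_Icc ha hb
  obtain ⟨y', hy', z', hz', hbot⟩ := ha.1.exists_mem_Icc ha hb
  have hab : a ≤ b := hy.1.trans hy.2
  exact ⟨fun x hx w hw => ⟨⟨le_inf hx.1 hw.1, inf_le_left.trans hx.2⟩,
      ⟨hx.1.trans le_sup_left, sup_le hx.2 hw.2⟩⟩,
    ⟨b, ⟨hab, le_rfl⟩, fun _ hx => hx.2, y, hy, z, hz, htop⟩,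
    ⟨a, ⟨le_rfl, hab⟩, fun _ hx => hx.1, y', hy', z', hz', hbot⟩⟩

lemma IsBlockSet.subset_Icc (ha : IsLeast {x : α | MeetReducible x} a)
    (hb : IsGreatest {x : α | JoinReducible x} b) {s : Set α} (hs : IsBlockSet s) :
    s ⊆ Icc a b := by
  obtain ⟨-, ⟨t, -, hle, y, -, z, -, htop⟩, ⟨c, -, hge, y', -, z', -, hbot⟩⟩ := hs
  exact fun x hx =>
    ⟨(ha.2 ⟨y', z', hbot⟩).trans (hge x hx), (hle x hx).trans (hb.2 ⟨y, z, htop⟩)⟩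

end Reducibility

section CoverGraph

variable {α β : Type*} [PartialOrder α] [PartialOrder β]

lemma nullity_eq_of_iso (e : coverGraph α ≃g coverGraph β) : nullity α = nullity β := by
  rw [nullity, nullity, Nat.card_congr e.toEquiv, Nat.card_congr e.mapEdgeSet,
    Nat.card_congr e.connectedComponentEquiv]

def OrderIso.coverGraphIso (e : α ≃o β) : coverGraph α ≃g coverGraph β where
  toEquiv := e.toEquiv
  map_rel_iff' := by simp [coverGraph, apply_covBy_apply_iff]

lemma nullity_congr (e : α ≃o β) : nullity α = nullity β :=
  nullity_eq_of_iso e.coverGraphIso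

-- `coverGraph α` is definitionally Mathlib's Hasse diagram `SimpleGraph.hasse α`.
lemma nullity_orderDual : nullity αᵒᵈ = nullity α :=
  nullity_eq_of_iso SimpleGraph.hasseDualIso

lemma Set.OrdConnected.coe_covBy_coe {s : Set α} (hs : s.OrdConnected) {x y : s} :
    (x : α) ⋖ y ↔ x ⋖ y :=
  Set.OrdConnected.apply_covBy_apply_iff (OrderEmbedding.subtype (· ∈ s))
    (by rwa [OrderEmbedding.coe_subtype, Subtype.range_coe])

lemma card_edgeSet_coverGraph :
    Nat.card (coverGraph α).edgeSet = Nat.card {p : α × α // p.1 ⋖ p.2} := by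
  refine (Nat.card_eq_of_bijective
    (fun p => (⟨s(p.1.1, p.1.2), Or.inl p.2⟩ : (coverGraph α).edgeSet)) ⟨?_, ?_⟩).symm
  · rintro ⟨⟨x, y⟩, hxy⟩ ⟨⟨x', y'⟩, hxy'⟩ h
    rcases Sym2.eq_iff.mp (congrArg Subtype.val h) with ⟨rfl, rfl⟩ | ⟨rfl, rfl⟩
    · rfl
    · exact absurd hxy'.lt hxy.lt.not_gt
  · rintro ⟨e, he⟩
    induction e using Sym2.ind with | _ x y =>
    rcases he with h | h
    · exact ⟨⟨(x, y), h⟩, rfl⟩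
    · exact ⟨⟨(y, x), h⟩, Subtype.ext Sym2.eq_swap⟩

lemma coverGraph_reachable_of_le [Finite α] {x y : α} (h : x ≤ y) :
    (coverGraph α).Reachable x y := by
  classical
  have := Fintype.ofFinite α
  let := Fintype.toLocallyFiniteOrder (α := α)
  exact (SimpleGraph.reachable_iff_reflTransGen x y).mpr
    (Relation.ReflTransGen.mono (fun _ _ => Or.inl) _ _ (le_iff_reflTransGen_covBy.mp h))

lemma card_connectedComponent_coverGraph [Finite α] (a : α) (ha : ∀ x, x ≤ a ∨ a ≤ x) :
    Nat.card (coverGraph α).ConnectedComponent = 1 := by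
  have reach (x : α) : (coverGraph α).Reachable a x :=
    (ha x).elim (fun h => (coverGraph_reachable_of_le h).symm) coverGraph_reachable_of_le
  have : Subsingleton (coverGraph α).ConnectedComponent :=
    SimpleGraph.Preconnected.subsingleton_connectedComponent fun x y =>
      (reach x).symm.trans (reach y)
  have : Nonempty (coverGraph α).ConnectedComponent := ⟨(coverGraph α).connectedComponentMk a⟩
  exact Nat.card_unique

end CoverGraph

section Nullity

variable {α : Type*} [PartialOrder α] {a b : α}

lemma lt_or_ge_of_le_or_ge {x y : α} (h : x ≤ y ∨ y ≤ x) : x < y ∨ y ≤ x :=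
  h.elim (fun h => h.lt_or_eq.imp_right Eq.ge) Or.inr

lemma le_of_covBy_of_lt (hcomp : ∀ x, x ≤ a ∨ a ≤ x) {x y : α} (hx : x < a) (hxy : x ⋖ y) :
    y ≤ a :=
  (hcomp y).elim id fun hay => ((hxy.wcovBy.eq_or_eq hx.le hay).resolve_left hx.ne').ge

lemma card_covBy_fst_lt [Finite α] (hcomp : ∀ x, x ≤ a ∨ a ≤ x)
    (hchain : IsChain (· ≤ ·) (Iic a)) :
    Nat.card {q : {p : α × α // p.1 ⋖ p.2} // q.1.1 < a} = Nat.card (Iio a) := by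
  refine Nat.card_eq_of_bijective (fun q => ⟨q.1.1.1, q.2⟩) ⟨?_, fun x => ?_⟩
  · rintro ⟨⟨⟨x, y⟩, hy⟩, hx⟩ ⟨⟨⟨x', y'⟩, hy'⟩, _⟩ h
    obtain rfl : x = x' := congrArg Subtype.val h
    suffices y = y' by subst this; rfl
    rcases hchain.total (le_of_covBy_of_lt hcomp hx hy) (le_of_covBy_of_lt hcomp hx hy')
      with h | h
    · exact (hy'.wcovBy.eq_or_eq hy.le h).resolve_left hy.ne'
    · exact ((hy.wcovBy.eq_or_eq hy'.le h).resolve_left hy'.ne').symm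
  · obtain ⟨y, hy, -⟩ := exists_covBy_le_of_lt x.2
    exact ⟨⟨⟨(x, y), hy⟩, x.2⟩, rfl⟩

lemma card_covBy_fst_not_lt (hcomp : ∀ x, x ≤ a ∨ a ≤ x) :
    Nat.card {q : {p : α × α // p.1 ⋖ p.2} // ¬ q.1.1 < a} =
      Nat.card {p : Ici a × Ici a // p.1 ⋖ p.2} := by
  refine (Nat.card_eq_of_bijective (fun p => ⟨⟨(p.1.1, p.1.2),
    ordConnected_Ici.coe_covBy_coe.mpr p.2⟩, p.1.1.2.not_gt⟩) ⟨?_, ?_⟩).symm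
  · rintro ⟨⟨x, y⟩, hxy⟩ ⟨⟨x', y'⟩, hxy'⟩ h
    simp only [Subtype.mk.injEq, Prod.mk.injEq] at h
    obtain ⟨rfl, rfl⟩ : x = x' ∧ y = y' := ⟨Subtype.ext h.1, Subtype.ext h.2⟩
    rfl
  · rintro ⟨⟨⟨x, y⟩, hxy⟩, hx⟩
    have hax : a ≤ x := (lt_or_ge_of_le_or_ge (hcomp x)).resolve_left hx
    exact ⟨⟨(⟨x, hax⟩, ⟨y, hax.trans hxy.le⟩), ordConnected_Ici.coe_covBy_coe.mp hxy⟩, rfl⟩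

lemma nullity_Ici_eq [Finite α] (hcomp : ∀ x, x ≤ a ∨ a ≤ x)
    (hchain : IsChain (· ≤ ·) (Iic a)) : nullity (Ici a) = nullity α := by
  classical
  have hverts : Nat.card α = Nat.card (Iio a) + Nat.card (Ici a) := by
    rw [← Nat.card_congr (Equiv.sumCompl (· < a)), Nat.card_sum]
    exact congrArg _ (Nat.card_congr (Equiv.subtypeEquivRight fun x =>
      ⟨(lt_or_ge_of_le_or_ge (hcomp x)).resolve_left, not_lt_of_ge⟩))
  have hedges : Nat.card (coverGraph α).edgeSet =
      Nat.card (Iio a) + Nat.card (coverGraph (Ici a)).edgeSet := by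
    rw [card_edgeSet_coverGraph, card_edgeSet_coverGraph,
      ← Nat.card_congr (Equiv.sumCompl fun q : {p : α × α // p.1 ⋖ p.2} => q.1.1 < a),
      Nat.card_sum, card_covBy_fst_lt hcomp hchain, card_covBy_fst_not_lt hcomp]
  rw [nullity, nullity, hverts, hedges, card_connectedComponent_coverGraph a hcomp,
    card_connectedComponent_coverGraph (⟨a, le_rfl⟩ : Ici a) fun x => Or.inr x.2]
  push_cast
  ring

def OrderIso.IciToDual (b : α) : Ici (toDual b) ≃o (Iic b)ᵒᵈ where
  toEquiv := Equiv.refl _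
  map_rel_iff' := Iff.rfl

def OrderIso.IicIci (hab : a ≤ b) : Iic (⟨b, hab⟩ : Ici a) ≃o Icc a b where
  toFun x := ⟨x.1.1, x.1.2, x.2⟩
  invFun x := ⟨⟨x.1, x.2.1⟩, x.2.2⟩
  left_inv _ := rfl
  right_inv _ := rfl
  map_rel_iff' := Iff.rfl

lemma nullity_Iic_eq [Finite α] (hcomp : ∀ x, x ≤ b ∨ b ≤ x)
    (hchain : IsChain (· ≤ ·) (Ici b)) : nullity (Iic b) = nullity α := by
  rw [← nullity_orderDual, ← nullity_congr (OrderIso.IciToDual b),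
    nullity_Ici_eq (α := αᵒᵈ) (a := toDual b) (fun x => (hcomp x).symm) hchain.symm,
    nullity_orderDual]

lemma nullity_Icc_eq [Finite α] (hab : a ≤ b) (hca : ∀ x, x ≤ a ∨ a ≤ x)
    (hcb : ∀ x, x ≤ b ∨ b ≤ x) (ha : IsChain (· ≤ ·) (Iic a)) (hb : IsChain (· ≤ ·) (Ici b)) :
    nullity (Icc a b) = nullity α := by
  have hb' : IsChain (· ≤ ·) (Ici (⟨b, hab⟩ : Ici a)) :=
    fun x hx y hy hxy => hb hx hy (Subtype.coe_injective.ne hxy)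
  rw [← nullity_congr (OrderIso.IicIci hab),
    nullity_Iic_eq (α := Ici a) (b := ⟨b, hab⟩) (fun x => hcb x) hb', nullity_Ici_eq hca ha]

lemma exists_chains_sum_Icc (hab : a ≤ b) (hca : ∀ x, x ≤ a ∨ a ≤ x)
    (hcb : ∀ x, x ≤ b ∨ b ≤ x) (ha : IsChain (· ≤ ·) (Iic a)) (hb : IsChain (· ≤ ·) (Ici b)) :
    ∃ C₁ C₂ : Set α, IsChain (· ≤ ·) C₁ ∧ IsChain (· ≤ ·) C₂ ∧
      Disjoint C₁ (Icc a b) ∧ Disjoint C₁ C₂ ∧ Disjoint (Icc a b) C₂ ∧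
      C₁ ∪ Icc a b ∪ C₂ = univ ∧
      (∀ x ∈ C₁, ∀ y ∈ Icc a b ∪ C₂, x ≤ y) ∧ (∀ x ∈ Icc a b, ∀ y ∈ C₂, x ≤ y) := by
  refine ⟨Iio a, Ioi b, ha.mono Iio_subset_Iic_self, hb.mono Ioi_subset_Ici_self,
    disjoint_left.mpr fun x hx hx' => hx.not_ge hx'.1,
    disjoint_left.mpr fun x hx hx' => (hx.trans_le hab).not_gt hx',
    disjoint_left.mpr fun x hx hx' => hx'.not_ge hx.2,
    eq_univ_of_forall fun x => ?_, ?_, fun x hx y hy => hx.2.trans hy.le⟩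
  · rcases lt_or_ge_of_le_or_ge (hca x) with hxa | hax
    · exact Or.inl (Or.inl hxa)
    rcases lt_or_ge_of_le_or_ge (hcb x).symm with hbx | hxb
    exacts [Or.inr hbx, Or.inl (Or.inr ⟨hax, hxb⟩)]
  · rintro x hx y (hy | hy)
    exacts [hx.le.trans hy.1, (hx.le.trans hab).trans hy.le]

end Nullity

theorem stmt8_general {α : Type*} [Lattice α] [Fintype α]
    (hnc : ¬ ∀ x y : α, x ≤ y ∨ y ≤ x) :
    ∃ B : Set α,
      (IsBlockSet B ∧ ∀ B' : Set α, IsBlockSet B' → B ⊆ B' → B = B') ∧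
      (∀ B' : Set α,
        (IsBlockSet B' ∧ ∀ B'' : Set α, IsBlockSet B'' → B' ⊆ B'' → B' = B'') → B' = B) ∧
      (∃ C₁ C₂ : Set α, IsChain (· ≤ ·) C₁ ∧ IsChain (· ≤ ·) C₂ ∧
        Disjoint C₁ B ∧ Disjoint C₁ C₂ ∧ Disjoint B C₂ ∧
        C₁ ∪ B ∪ C₂ = Set.univ ∧
        (∀ x ∈ C₁, ∀ y ∈ B ∪ C₂, x ≤ y) ∧ (∀ x ∈ B, ∀ y ∈ C₂, x ≤ y)) ∧
      nullity ↥B = nullity α ∧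
      RedSet α = RedIn B := by
  simp only [not_forall, not_or] at hnc
  obtain ⟨u, v, huv, hvu⟩ := hnc
  have hmr := meetReducible_inf_of_not_le huv hvu
  have hjr := joinReducible_sup_of_not_le huv hvu
  obtain ⟨a, ha⟩ := infClosed_meetReducible.exists_isLeast ⟨_, hmr⟩
  obtain ⟨b, hb⟩ := supClosed_joinReducible.exists_isGreatest ⟨_, hjr⟩
  have hab : a ≤ b := (ha.2 hmr).trans (inf_le_sup.trans (hb.2 hjr))
  have hblock := isBlockSet_Icc ha hb
  have hca := le_or_ge_of_isLeast_meetReducible ha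
  have hcb := le_or_ge_of_isGreatest_joinReducible hb
  have hIic := isChain_Iic_of_isLeast_meetReducible ha
  have hIci := isChain_Ici_of_isGreatest_joinReducible hb
  have hmax (B' : Set α) (hB' : IsBlockSet B') : B' ⊆ Icc a b := hB'.subset_Icc ha hb
  exact ⟨Icc a b, ⟨hblock, fun B' hB' hsub => hsub.antisymm (hmax B' hB')⟩,
    fun B' hB' => hB'.2 _ hblock (hmax B' hB'.1), exists_chains_sum_Icc hab hca hcb hIic hIci,
    nullity_Icc_eq hab hca hcb hIic hIci, redSet_eq_redIn_Icc ha hb⟩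

/-- A finite lattice which is not a chain contains a unique maximal sublattice `B`
which is a block; `L` is a direct sum `C₁ ⊕ B ⊕ C₂` with `C₁, C₂` (possibly empty)
chains, and `η(L) = η(B)`, `Red(L) = Red(B)`. -/
theorem stmt8 {α : Type*} [Lattice α] [Fintype α] [Nonempty α]
    (hnc : ¬ ∀ x y : α, x ≤ y ∨ y ≤ x) :
    ∃ B : Set α,
      (IsBlockSet B ∧ ∀ B' : Set α, IsBlockSet B' → B ⊆ B' → B = B') ∧
      (∀ B' : Set α,
        (IsBlockSet B' ∧ ∀ B'' : Set α, IsBlockSet B'' → B' ⊆ B'' → B' = B'') → B' = B) ∧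
      (∃ C₁ C₂ : Set α, IsChain (· ≤ ·) C₁ ∧ IsChain (· ≤ ·) C₂ ∧
        Disjoint C₁ B ∧ Disjoint C₁ C₂ ∧ Disjoint B C₂ ∧
        C₁ ∪ B ∪ C₂ = Set.univ ∧
        (∀ x ∈ C₁, ∀ y ∈ B ∪ C₂, x ≤ y) ∧ (∀ x ∈ B, ∀ y ∈ C₂, x ≤ y)) ∧
      nullity ↥B = nullity α ∧
      RedSet α = RedIn B :=
  stmt8_general hnc
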